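/- arXiv:2209.07868 — 3 statements merged into one kernel-verified Lean document; each statement's English description precedes it below -/
import Mathlib

section
/- Let Q1 and Q2 be probability measures on the real line. Suppose there exists a dense subset D of ℝ such that for all x < y in D with Q1((x,y]) > 0 and Q2((x,y]) > 0, the conditional distributions satisfy Q1(·|(x,y]) ≤_st Q2(·|(x,y]). Then Q1 ≤_lr Q2. -/
open MeasureTheory Set Filter

noncomputable section

/-- `g` is a (measurable, nonnegative) density of `Q` with respect to `μ`,
i.e. `Q B = ∫_B g dμ` for all Borel sets `B`. -/
def IsDensity (Q μ : Measure ℝ) (g : ℝ → ENNReal) : Prop :=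
  Measurable g ∧ ∀ B : Set ℝ, MeasurableSet B → Q B = ∫⁻ x in B, g x ∂μ

/-- Likelihood ratio order `Q1 ≤_lr Q2`: there exist a σ-finite measure `μ` and densities
`g1 = dQ1/dμ`, `g2 = dQ2/dμ` such that the ratio `g2/g1` (with values in `[0,∞]`)
is nondecreasing on the set `{g1 + g2 > 0}`. -/
def LikelihoodRatioLE (Q1 Q2 : Measure ℝ) : Prop :=
  ∃ (μ : Measure ℝ) (g1 g2 : ℝ → ENNReal), SigmaFinite μ ∧
    IsDensity Q1 μ g1 ∧ IsDensity Q2 μ g2 ∧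
    ∀ x y : ℝ, x ≤ y → 0 < g1 x + g2 x → 0 < g1 y + g2 y →
      g2 x / g1 x ≤ g2 y / g1 y

open Topology Metric
open scoped ENNReal

/-!
Take `μ = Q1 + Q2` and `gᵢ = dQᵢ/dμ`, so that `g1 + g2 = 1` `μ`-a.e.; it then suffices that `g2`
is nondecreasing on a `μ`-conull set. The conditional stochastic order on `(a,d]`, evaluated at
`b ∈ [a,d]`, compares the tails `(b,d]`; splitting `(a,d]` at `b` and chaining two such
comparisons gives `Q2(I) Q1(J) ≤ Q1(I) Q2(J)` whenever the interval `I` lies to the left of `J`,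
first for half-open intervals with endpoints in `D` and then, by density of `D` and continuity of
measures, for closed intervals. So `Q2(B)/μ(B)` increases along closed balls `B` of a fixed radius
with increasing centres, and by Besicovitch differentiation these ratios tend to `g2` `μ`-a.e.
-/

namespace ENNReal

lemma div_le_div_iff_mul_le_mul {a b c d : ℝ≥0∞} (hb0 : b ≠ 0) (hbt : b ≠ ∞) (hd0 : d ≠ 0)
    (hdt : d ≠ ∞) : a / b ≤ c / d ↔ a * d ≤ c * b := by
  rw [ENNReal.div_le_iff hb0 hbt, ← ENNReal.mul_div_right_comm,
    ENNReal.le_div_iff_mul_le (.inl hd0) (.inl hdt)]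

/-- Transitivity of the ratio comparison `x / y ≤ v / u ≤ z / w`, in cross-multiplied form. -/
lemma mul_le_mul_of_cross_mul_le {x y u v w z : ℝ≥0∞} (hxu : x * u ≤ y * v)
    (hwv : w * v ≤ z * u) (hwu : w ≤ u) (hu : u ≠ ∞) (hv : v ≠ ∞) : x * w ≤ y * z := by
  rcases eq_or_ne u 0 with rfl | hu0
  · simp [nonpos_iff_eq_zero.mp hwu]
  rcases eq_or_ne v 0 with rfl | hv0
  · simp [show x = 0 by simpa [hu0] using hxu]
  refine (ENNReal.mul_le_mul_iff_left (mul_ne_zero hu0 hv0) (mul_ne_top hu hv)).mp ?_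
  calc x * w * (u * v) = x * u * (w * v) := by ring
    _ ≤ y * v * (z * u) := mul_le_mul' hxu hwv
    _ = y * z * (u * v) := by ring

lemma div_le_div_of_add_eq_one {a b c d : ℝ≥0∞} (hab : a + b = 1) (hcd : c + d = 1)
    (hbd : b ≤ d) : b / a ≤ d / c := by
  have hb : b ≠ ∞ := ne_top_of_le_ne_top one_ne_top (hab ▸ le_add_self)
  refine ENNReal.div_le_div hbd (ENNReal.le_of_add_le_add_right hb ?_)
  calc c + b ≤ c + d := by gcongr
    _ = a + b := hcd.trans hab.symm

end ENNReal

/-- `Q1 (· | (x,y]) ≤_st Q2 (· | (x,y])` for all `x < y` in `D` where both conditionings exist. -/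
def CondStochLEOnIoc (Q1 Q2 : Measure ℝ) (D : Set ℝ) : Prop :=
  ∀ x y : ℝ, x ∈ D → y ∈ D → x < y → 0 < Q1 (Ioc x y) → 0 < Q2 (Ioc x y) →
    ∀ t : ℝ, Q1 (Ioi t ∩ Ioc x y) / Q1 (Ioc x y) ≤ Q2 (Ioi t ∩ Ioc x y) / Q2 (Ioc x y)

lemma tendsto_measure_Ioc_of_tendsto (ν : Measure ℝ) [IsFiniteMeasure ν] {a b : ℕ → ℝ}
    {p q : ℝ} (ha : Monotone a) (hap : ∀ n, a n < p) (ha_lim : Tendsto a atTop (𝓝 p))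
    (hb : Antitone b) (hbq : ∀ n, q ≤ b n) (hb_lim : Tendsto b atTop (𝓝 q)) :
    Tendsto (fun n ↦ ν (Ioc (a n) (b n))) atTop (𝓝 (ν (Icc p q))) := by
  have hinter : ⋂ n, Ioc (a n) (b n) = Icc p q := by
    ext x
    simp only [mem_iInter, mem_Ioc, mem_Icc]
    exact ⟨fun hx ↦ ⟨le_of_tendsto' ha_lim fun n ↦ (hx n).1.le,
        ge_of_tendsto' hb_lim fun n ↦ (hx n).2⟩,
      fun hx n ↦ ⟨(hap n).trans_le hx.1, hx.2.trans (hbq n)⟩⟩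
  rw [← hinter]
  exact tendsto_measure_iInter_atTop (fun _ ↦ measurableSet_Ioc.nullMeasurableSet)
    (fun _ _ hmn ↦ Ioc_subset_Ioc (ha hmn) (hb hmn)) ⟨0, measure_ne_top _ _⟩

namespace CondStochLEOnIoc

variable {Q1 Q2 : Measure ℝ} [IsFiniteMeasure Q1] [IsFiniteMeasure Q2] {D : Set ℝ}
  {a b c d : ℝ}

lemma tail_mul_le (h : CondStochLEOnIoc Q1 Q2 D) (ha : a ∈ D) (hd : d ∈ D) (hab : a ≤ b) :
    Q1 (Ioc b d) * Q2 (Ioc a d) ≤ Q2 (Ioc b d) * Q1 (Ioc a d) := by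
  rcases eq_or_ne (Q1 (Ioc a d)) 0 with h1 | h1
  · simp [measure_mono_null (Ioc_subset_Ioc_left hab) h1]
  rcases eq_or_ne (Q2 (Ioc a d)) 0 with h2 | h2
  · simp [h2]
  have had : a < d := nonempty_Ioc.mp (nonempty_of_measure_ne_zero h1)
  have hcond := h a d ha hd had (pos_iff_ne_zero.2 h1) (pos_iff_ne_zero.2 h2) b
  rwa [inter_comm, Ioc_inter_Ioi, max_eq_right hab,
    ENNReal.div_le_div_iff_mul_le_mul h1 (measure_ne_top _ _) h2 (measure_ne_top _ _)] at hcond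

lemma adjacent_mul_le (h : CondStochLEOnIoc Q1 Q2 D) (ha : a ∈ D) (hd : d ∈ D) (hab : a ≤ b)
    (hbd : b ≤ d) : Q2 (Ioc a b) * Q1 (Ioc b d) ≤ Q1 (Ioc a b) * Q2 (Ioc b d) := by
  have htail := h.tail_mul_le ha hd hab
  have hsplit (Q : Measure ℝ) : Q (Ioc a d) = Q (Ioc a b) + Q (Ioc b d) := by
    rw [← Ioc_union_Ioc_eq_Ioc hab hbd,
      measure_union (Ioc_disjoint_Ioc_of_le le_rfl) measurableSet_Ioc]
  rw [hsplit, hsplit, mul_add, mul_add, mul_comm (Q2 (Ioc b d)) (Q1 (Ioc b d)),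
    ENNReal.add_le_add_iff_right (ENNReal.mul_ne_top (measure_ne_top _ _) (measure_ne_top _ _))]
    at htail
  rwa [mul_comm (Q2 _), mul_comm (Q1 (Ioc a b))]

lemma measure_Ioc_mul_le (h : CondStochLEOnIoc Q1 Q2 D) (ha : a ∈ D) (hb : b ∈ D) (hd : d ∈ D)
    (hab : a ≤ b) (hbc : b ≤ c) (hcd : c ≤ d) :
    Q2 (Ioc a b) * Q1 (Ioc c d) ≤ Q1 (Ioc a b) * Q2 (Ioc c d) :=
  ENNReal.mul_le_mul_of_cross_mul_le (h.adjacent_mul_le ha hd hab (hbc.trans hcd))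
    (h.tail_mul_le hb hd hbc) (measure_mono (Ioc_subset_Ioc_left hbc))
    (measure_ne_top _ _) (measure_ne_top _ _)

lemma measure_Icc_mul_le (h : CondStochLEOnIoc Q1 Q2 D) (hD : Dense D) {p q s t : ℝ}
    (hpq : p ≤ q) (hqs : q < s) (hst : s ≤ t) :
    Q2 (Icc p q) * Q1 (Icc s t) ≤ Q1 (Icc p q) * Q2 (Icc s t) := by
  obtain ⟨m, hqm, hms⟩ := exists_between hqs
  obtain ⟨a, ha_mono, ha, ha_lim⟩ := hD.exists_seq_strictMono_tendsto p
  obtain ⟨b, hb_anti, hb, hb_lim⟩ := hD.exists_seq_strictAnti_tendsto_of_lt hqm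
  obtain ⟨c, hc_mono, hc, hc_lim⟩ := hD.exists_seq_strictMono_tendsto_of_lt hms
  obtain ⟨d, hd_anti, hd, hd_lim⟩ := hD.exists_seq_strictAnti_tendsto t
  have hI (Q : Measure ℝ) [IsFiniteMeasure Q] :=
    tendsto_measure_Ioc_of_tendsto Q ha_mono.monotone (fun n ↦ (ha n).1) ha_lim
      hb_anti.antitone (fun n ↦ (hb n).1.1.le) hb_lim
  have hJ (Q : Measure ℝ) [IsFiniteMeasure Q] :=
    tendsto_measure_Ioc_of_tendsto Q hc_mono.monotone (fun n ↦ (hc n).1.2) hc_lim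
      hd_anti.antitone (fun n ↦ (hd n).1.le) hd_lim
  refine le_of_tendsto_of_tendsto'
    (ENNReal.Tendsto.mul (hI Q2) (.inr (measure_ne_top _ _)) (hJ Q1) (.inr (measure_ne_top _ _)))
    (ENNReal.Tendsto.mul (hI Q1) (.inr (measure_ne_top _ _)) (hJ Q2) (.inr (measure_ne_top _ _)))
    fun n ↦ h.measure_Ioc_mul_le (ha n).2 (hb n).2 (hd n).2 ((ha n).1.le.trans (hpq.trans (hb n).1.1.le))
      ((hb n).1.2.trans (hc n).1.1).le ((hc n).1.2.le.trans (hst.trans (hd n).1.le))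

lemma measure_Icc_mul_add_le (h : CondStochLEOnIoc Q1 Q2 D) (hD : Dense D) {p q s t : ℝ}
    (hpq : p ≤ q) (hqs : q < s) (hst : s ≤ t) :
    Q2 (Icc p q) * (Q1 + Q2) (Icc s t) ≤ (Q1 + Q2) (Icc p q) * Q2 (Icc s t) := by
  simp only [Measure.add_apply, mul_add, add_mul]
  exact add_le_add_left (h.measure_Icc_mul_le hD hpq hqs hst) _

end CondStochLEOnIoc

lemma le_of_tendsto_div_measure_closedBall {ν μ : Measure ℝ} [IsFiniteMeasure μ]
    (hνμ : ∀ p q s t : ℝ, p ≤ q → q < s → s ≤ t →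
      ν (Icc p q) * μ (Icc s t) ≤ μ (Icc p q) * ν (Icc s t))
    {x y : ℝ} {α β : ℝ≥0∞} (hxy : x < y) (hx : x ∈ μ.support) (hy : y ∈ μ.support)
    (hxα : Tendsto (fun ρ ↦ ν (closedBall x ρ) / μ (closedBall x ρ)) (𝓝[>] 0) (𝓝 α))
    (hyβ : Tendsto (fun ρ ↦ ν (closedBall y ρ) / μ (closedBall y ρ)) (𝓝[>] 0) (𝓝 β)) :
    α ≤ β := by
  refine le_of_tendsto_of_tendsto hxα hyβ ?_
  filter_upwards [Ioo_mem_nhdsGT (half_pos (sub_pos.2 hxy))] with ρ ⟨hρ, hρxy⟩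
  have hball {z : ℝ} (hz : z ∈ μ.support) : μ (closedBall z ρ) ≠ 0 :=
    ((Measure.mem_support_iff_forall z).1 hz _ (closedBall_mem_nhds z hρ)).ne'
  rw [ENNReal.div_le_div_iff_mul_le_mul (hball hx) (measure_ne_top _ _) (hball hy)
    (measure_ne_top _ _), mul_comm (ν (closedBall y ρ)), Real.closedBall_eq_Icc, Real.closedBall_eq_Icc]
  exact hνμ (x - ρ) (x + ρ) (y - ρ) (y + ρ) (by linarith) (by linarith) (by linarith)

lemma isDensity_indicator_rnDeriv {Q μ : Measure ℝ} [Q.HaveLebesgueDecomposition μ]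
    (hQμ : Q ≪ μ) {S : Set ℝ} (hS : MeasurableSet S) (hS_ae : S ∈ ae μ) :
    IsDensity Q μ (S.indicator (Q.rnDeriv μ)) := by
  refine ⟨(Measure.measurable_rnDeriv Q μ).indicator hS, fun B hB ↦ ?_⟩
  rw [← Measure.setLIntegral_rnDeriv' hQμ hB]
  refine lintegral_congr_ae (ae_restrict_of_ae ?_)
  filter_upwards [hS_ae] with x hx
  rw [indicator_of_mem hx]

theorem stmt_8 (Q1 Q2 : Measure ℝ) [IsProbabilityMeasure Q1] [IsProbabilityMeasure Q2]
    (D : Set ℝ) (hD : Dense D)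
    (h : ∀ x y : ℝ, x ∈ D → y ∈ D → x < y →
      0 < Q1 (Ioc x y) → 0 < Q2 (Ioc x y) →
      ∀ t : ℝ, Q1 (Ioi t ∩ Ioc x y) / Q1 (Ioc x y) ≤ Q2 (Ioi t ∩ Ioc x y) / Q2 (Ioc x y)) :
    LikelihoodRatioLE Q1 Q2 := by
  set μ := Q1 + Q2
  have hsum : ∀ᵐ x ∂μ, Q1.rnDeriv μ x + Q2.rnDeriv μ x = 1 := by
    filter_upwards [Measure.rnDeriv_add' Q1 Q2 μ, μ.rnDeriv_self] with x h12 hμ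
    rw [← Pi.add_apply, ← h12, hμ]
  obtain ⟨S, hS_ae, hS, hgood⟩ := (hsum.and
    ((Besicovitch.ae_tendsto_rnDeriv Q2 μ).and Measure.support_mem_ae)).exists_measurable_mem
  refine ⟨μ, S.indicator (Q1.rnDeriv μ), S.indicator (Q2.rnDeriv μ), inferInstance,
    isDensity_indicator_rnDeriv (Measure.AbsolutelyContinuous.rfl.add_right Q2) hS hS_ae,
    isDensity_indicator_rnDeriv (Measure.AbsolutelyContinuous.rfl.add_right' Q1) hS hS_ae, ?_⟩
  have mem_S {z : ℝ} (hz : 0 < S.indicator (Q1.rnDeriv μ) z + S.indicator (Q2.rnDeriv μ) z) :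
      z ∈ S := by
    by_contra hzS
    simp [indicator_of_notMem hzS] at hz
  intro x y hxy hx hy
  obtain ⟨hx1, hx_lim, hxμ⟩ := hgood x (mem_S hx)
  obtain ⟨hy1, hy_lim, hyμ⟩ := hgood y (mem_S hy)
  simp only [indicator_of_mem (mem_S hx), indicator_of_mem (mem_S hy)]
  rcases hxy.eq_or_lt with rfl | hlt
  · rfl
  exact ENNReal.div_le_div_of_add_eq_one hx1 hy1 <| le_of_tendsto_div_measure_closedBall
    (fun _ _ _ _ ↦ CondStochLEOnIoc.measure_Icc_mul_add_le h hD) hlt hxμ hyμ hx_lim hy_lim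
end
end

section
/- Let Q1 and Q2 be probability measures on the real line. Then Q1 ≤_lr Q2 if and only if the set ROC(Q1,Q2) is concave in the following sense: whenever (a1,a2), (b1,b2), (c1,c2) are three pairwise different points of ROC(Q1,Q2) with a1 ≤ b1 ≤ c1 and a2 ≤ b2 ≤ c2, one has (b2 − a2)·(c1 − b1) ≥ (c2 − b2)·(b1 − a1). -/
open MeasureTheory Set Filter

noncomputable section

/-- The family of half-lines `(y,∞)`, `[y,∞)`, together with `∅` and `ℝ`. -/
def Halflines : Set (Set ℝ) :=
  {H | (∃ y : ℝ, H = Ioi y) ∨ (∃ y : ℝ, H = Ici y) ∨ H = (∅ : Set ℝ) ∨ H = (univ : Set ℝ)}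

/-- The receiver operating characteristic of `(Q1, Q2)`. -/
def ROC (Q1 Q2 : Measure ℝ) : Set (ℝ × ℝ) :=
  {p | ∃ H ∈ Halflines, p = ((Q1 H).toReal, (Q2 H).toReal)}


/-! Three distinct, componentwise ordered points of the ROC come from nested half-lines
`Ha ⊆ Hb ⊆ Hc`, and the concavity inequality says `Q2 L * Q1 R ≤ Q1 L * Q2 R` for the sets
`L = Hc \ Hb` and `R = Hb \ Ha`, every point of `L` lying to the left of every point of `R`.
Under `Q1 ≤_lr Q2` this follows by integrating `g2 u * g1 v ≤ g1 u * g2 v` over `L × R`.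

Conversely, concavity yields the same inequality for any two separated closed intervals, so the
ratio `Q2 I / (Q1 + Q2) I` increases along separated intervals. By the Besicovitch
differentiation theorem `g = dQ2 / d(Q1 + Q2)` is then a.e. equal to a monotone function with
values in `[0, 1]`, and `1 - g`, `g` are densities of `Q1`, `Q2` with nondecreasing ratio. -/

open scoped ENNReal Topology

lemma isUpperSet_of_mem_halflines {H : Set ℝ} (hH : H ∈ Halflines) : IsUpperSet H := by
  rcases hH with ⟨y, rfl⟩ | ⟨y, rfl⟩ | rfl | rfl
  exacts [isUpperSet_Ioi y, isUpperSet_Ici y, isUpperSet_empty, isUpperSet_univ]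

lemma measurableSet_of_mem_halflines {H : Set ℝ} (hH : H ∈ Halflines) : MeasurableSet H := by
  rcases hH with ⟨y, rfl⟩ | ⟨y, rfl⟩ | rfl | rfl
  exacts [measurableSet_Ioi, measurableSet_Ici, MeasurableSet.empty, MeasurableSet.univ]

lemma Ioi_mem_halflines (y : ℝ) : Ioi y ∈ Halflines := Or.inl ⟨y, rfl⟩

lemma Ici_mem_halflines (y : ℝ) : Ici y ∈ Halflines := Or.inr (Or.inl ⟨y, rfl⟩)

lemma ENNReal.mul_le_mul_of_div_le_div {a₁ a₂ b₁ b₂ : ℝ≥0∞} (ha₁ : a₁ ≠ ∞) (hb₁ : b₁ ≠ ∞)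
    (hb₂ : b₂ ≠ ∞) (h : 0 < a₁ + a₂ → 0 < b₁ + b₂ → a₂ / a₁ ≤ b₂ / b₁) :
    a₂ * b₁ ≤ a₁ * b₂ := by
  rcases eq_or_ne a₂ 0 with ha₂ | ha₂
  · simp [ha₂]
  rcases eq_or_ne b₁ 0 with hb₁' | hb₁'
  · simp [hb₁']
  have hab := h (pos_of_ne_zero (by simp [ha₂])) (pos_of_ne_zero (by simp [hb₁']))
  rcases eq_or_ne a₁ 0 with ha₁' | ha₁'
  · rw [ha₁', ENNReal.div_zero ha₂, top_le_iff, ENNReal.div_eq_top] at hab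
    rcases hab with ⟨-, h⟩ | ⟨h, -⟩
    exacts [absurd h hb₁', absurd h hb₂]
  rw [ENNReal.div_le_iff ha₁' ha₁] at hab
  calc a₂ * b₁ ≤ b₂ / b₁ * a₁ * b₁ := by gcongr
    _ = a₁ * b₂ := by rw [mul_right_comm, ENNReal.div_mul_cancel hb₁' hb₁, mul_comm]

lemma setLIntegral_mul_setLIntegral_le {α : Type*} [MeasurableSpace α] {μ : Measure α}
    {f₁ f₂ : α → ℝ≥0∞} (hf₁ : Measurable f₁) (hf₂ : Measurable f₂) {L R : Set α}
    (hL : MeasurableSet L) (hR : MeasurableSet R)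
    (h : ∀ u ∈ L, ∀ v ∈ R, f₂ u * f₁ v ≤ f₁ u * f₂ v) :
    (∫⁻ u in L, f₂ u ∂μ) * ∫⁻ v in R, f₁ v ∂μ ≤ (∫⁻ u in L, f₁ u ∂μ) * ∫⁻ v in R, f₂ v ∂μ := by
  calc (∫⁻ u in L, f₂ u ∂μ) * ∫⁻ v in R, f₁ v ∂μ
      = ∫⁻ u in L, ∫⁻ v in R, f₂ u * f₁ v ∂μ ∂μ := by
        rw [← lintegral_mul_const _ hf₂]
        exact lintegral_congr fun u => (lintegral_const_mul _ hf₁).symm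
    _ ≤ ∫⁻ u in L, ∫⁻ v in R, f₁ u * f₂ v ∂μ ∂μ :=
        setLIntegral_mono' hL fun u hu => setLIntegral_mono' hR fun v hv => h u hu v hv
    _ = (∫⁻ u in L, f₁ u ∂μ) * ∫⁻ v in R, f₂ v ∂μ := by
        rw [← lintegral_mul_const _ hf₁]
        exact lintegral_congr fun u => lintegral_const_mul _ hf₂

section Density

variable {Q μ : Measure ℝ} {g : ℝ → ℝ≥0∞}

lemma IsDensity.absolutelyContinuous (hg : IsDensity Q μ g) : Q ≪ μ :=
  .mk fun s hs hμs => by rw [hg.2 s hs]; exact setLIntegral_measure_zero _ _ hμs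

lemma IsDensity.ae_lt_top [IsFiniteMeasure Q] (hg : IsDensity Q μ g) : ∀ᵐ x ∂μ, g x < ∞ :=
  MeasureTheory.ae_lt_top hg.1 <| by
    rw [← setLIntegral_univ, ← hg.2 univ .univ]; exact measure_ne_top Q univ

lemma isDensity_of_ae_eq_rnDeriv [Q.HaveLebesgueDecomposition μ] (hQμ : Q ≪ μ)
    (hg : Measurable g) (hgQ : g =ᵐ[μ] Q.rnDeriv μ) : IsDensity Q μ g :=
  ⟨hg, fun B hB => by
    rw [setLIntegral_congr_fun_ae hB (hgQ.mono fun x hx _ => hx)]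
    exact (Measure.setLIntegral_rnDeriv' hQμ hB).symm⟩

lemma IsDensity.one_sub_of_add {Q' : Measure ℝ} [IsFiniteMeasure Q]
    (hg : IsDensity Q (Q' + Q) g) (hg_le : ∀ x, g x ≤ 1) : IsDensity Q' (Q' + Q) (1 - g) := by
  refine ⟨measurable_const.sub hg.1, fun B hB => ?_⟩
  have hfin : ∫⁻ x in B, g x ∂(Q' + Q) ≠ ∞ := by rw [← hg.2 B hB]; exact measure_ne_top Q B
  change Q' B = ∫⁻ x in B, 1 - g x ∂(Q' + Q)
  rw [lintegral_sub hg.1 hfin (.of_forall hg_le), setLIntegral_one,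
    ← hg.2 B hB, Measure.add_apply, ENNReal.add_sub_cancel_right (measure_ne_top Q B)]

end Density

-- `m₂ (l₁ j₂ - l₂ j₁) = j₂ (l₁ m₂ - l₂ m₁) + l₂ (m₁ j₂ - m₂ j₁)`; the case `m₂ = 0` is `hlmj`
lemma mul_le_mul_of_mul_le_mul_of_add {l₁ l₂ m₁ m₂ j₁ j₂ : ℝ} (hl₂ : 0 ≤ l₂) (hm₁ : 0 ≤ m₁)
    (hm₂ : 0 ≤ m₂) (hj₂ : 0 ≤ j₂) (hlm : l₂ * m₁ ≤ l₁ * m₂) (hmj : m₂ * j₁ ≤ m₁ * j₂)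
    (hlmj : l₂ * (m₁ + j₁) ≤ l₁ * (m₂ + j₂)) : l₂ * j₁ ≤ l₁ * j₂ := by
  rcases hm₂.eq_or_lt with rfl | hm₂
  · nlinarith [mul_nonneg hl₂ hm₁]
  · refine le_of_mul_le_mul_left ?_ hm₂
    nlinarith [mul_le_mul_of_nonneg_left hmj hl₂, mul_le_mul_of_nonneg_right hlm hj₂]

def ROCConcave (Q1 Q2 : Measure ℝ) : Prop :=
  ∀ a b c : ℝ × ℝ, a ∈ ROC Q1 Q2 → b ∈ ROC Q1 Q2 → c ∈ ROC Q1 Q2 →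
    a ≠ b → b ≠ c → a ≠ c →
    a.1 ≤ b.1 → b.1 ≤ c.1 → a.2 ≤ b.2 → b.2 ≤ c.2 →
    (c.2 - b.2) * (b.1 - a.1) ≤ (b.2 - a.2) * (c.1 - b.1)

section ROC

variable {Q1 Q2 : Measure ℝ} [IsFiniteMeasure Q1] [IsFiniteMeasure Q2]

lemma LikelihoodRatioLE.measure_mul_le (h : LikelihoodRatioLE Q1 Q2) {L R : Set ℝ}
    (hL : MeasurableSet L) (hR : MeasurableSet R) (hLR : ∀ u ∈ L, ∀ v ∈ R, u < v) :
    Q2 L * Q1 R ≤ Q1 L * Q2 R := by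
  obtain ⟨μ, g1, g2, -, hg1, hg2, hmono⟩ := h
  -- since `∞ / ∞ = 0` in `ℝ≥0∞`, the ratio bounds `g2 u * g1 v` only where `g1, g2 < ∞`
  set G : Set ℝ := {x | g1 x < ∞ ∧ g2 x < ∞}
  have hG : MeasurableSet G :=
    measurableSet_lt hg1.1 measurable_const |>.inter (measurableSet_lt hg2.1 measurable_const)
  have hμG : μ Gᶜ = 0 := ae_iff.1 (hg1.ae_lt_top.and hg2.ae_lt_top)
  rw [← measure_inter_conull (s := L) (hg1.absolutelyContinuous hμG),
    ← measure_inter_conull (s := R) (hg1.absolutelyContinuous hμG),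
    ← measure_inter_conull (s := L) (hg2.absolutelyContinuous hμG),
    ← measure_inter_conull (s := R) (hg2.absolutelyContinuous hμG),
    hg1.2 _ (hL.inter hG), hg1.2 _ (hR.inter hG), hg2.2 _ (hL.inter hG), hg2.2 _ (hR.inter hG)]
  refine setLIntegral_mul_setLIntegral_le hg1.1 hg2.1 (hL.inter hG) (hR.inter hG)
    fun u hu v hv => ENNReal.mul_le_mul_of_div_le_div hu.2.1.ne hv.2.1.ne hv.2.2.ne ?_
  exact hmono u v (hLR u hu.1 v hv.1).le

lemma subset_of_mem_halflines_of_le {H K : Set ℝ} (hH : H ∈ Halflines) (hK : K ∈ Halflines)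
    (h1 : Q1.real H ≤ Q1.real K) (h2 : Q2.real H ≤ Q2.real K)
    (hne : (Q1.real H, Q2.real H) ≠ (Q1.real K, Q2.real K)) : H ⊆ K := by
  refine ((isUpperSet_of_mem_halflines hH).total (isUpperSet_of_mem_halflines hK)).resolve_right
    fun hKH => hne ?_
  rw [le_antisymm h1 (measureReal_mono hKH), le_antisymm h2 (measureReal_mono hKH)]

theorem LikelihoodRatioLE.rocConcave (h : LikelihoodRatioLE Q1 Q2) : ROCConcave Q1 Q2 := by
  rintro _ _ _ ⟨Ha, hHa, rfl⟩ ⟨Hb, hHb, rfl⟩ ⟨Hc, hHc, rfl⟩ hab hbc - h11 h12 h21 h22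
  have hab' := subset_of_mem_halflines_of_le hHa hHb h11 h21 hab
  have hbc' := subset_of_mem_halflines_of_le hHb hHc h12 h22 hbc
  have hma := measurableSet_of_mem_halflines hHa
  have hmb := measurableSet_of_mem_halflines hHb
  have key := h.measure_mul_le ((measurableSet_of_mem_halflines hHc).diff hmb) (hmb.diff hma)
    fun u hu v hv => not_le.1 fun hvu => hu.2 (isUpperSet_of_mem_halflines hHb hvu hv.1)
  have key' := ENNReal.toReal_mono (by finiteness) key
  simp only [ENNReal.toReal_mul, ← measureReal_def, measureReal_sdiff (μ := Q1) hbc' hmb,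
    measureReal_sdiff (μ := Q2) hbc' hmb, measureReal_sdiff (μ := Q1) hab' hma,
    measureReal_sdiff (μ := Q2) hab' hma] at key'
  simp only [← measureReal_def]
  linarith

lemma ROCConcave.measureReal_mul_le (h : ROCConcave Q1 Q2) {A B C : Set ℝ} (hA : A ∈ Halflines)
    (hB : B ∈ Halflines) (hC : C ∈ Halflines) (hCB : C ⊆ B) (hBA : B ⊆ A) :
    Q2.real (A \ B) * Q1.real (B \ C) ≤ Q1.real (A \ B) * Q2.real (B \ C) := by
  have hmB := measurableSet_of_mem_halflines hB
  have hmC := measurableSet_of_mem_halflines hC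
  rw [measureReal_sdiff (μ := Q1) hBA hmB, measureReal_sdiff (μ := Q2) hBA hmB,
    measureReal_sdiff (μ := Q1) hCB hmC, measureReal_sdiff (μ := Q2) hCB hmC]
  by_cases hcb : (Q1.real C, Q2.real C) = (Q1.real B, Q2.real B)
  · simp only [Prod.ext_iff] at hcb
    simp [hcb]
  by_cases hba : (Q1.real B, Q2.real B) = (Q1.real A, Q2.real A)
  · simp only [Prod.ext_iff] at hba
    simp [hba]
  have h1 := measureReal_mono (μ := Q1) hCB
  have h2 := measureReal_mono (μ := Q1) hBA
  have h3 := measureReal_mono (μ := Q2) hCB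
  have h4 := measureReal_mono (μ := Q2) hBA
  have hca : (Q1.real C, Q2.real C) ≠ (Q1.real A, Q2.real A) := by
    simp only [ne_eq, Prod.ext_iff] at hcb ⊢
    exact fun ⟨e1, e2⟩ => hcb ⟨by linarith, by linarith⟩
  have := h _ _ _ ⟨C, hC, rfl⟩ ⟨B, hB, rfl⟩ ⟨A, hA, rfl⟩ hcb hba hca h1 h2 h3 h4
  simp only [← measureReal_def] at this
  linarith

lemma ROCConcave.measureReal_Icc_mul_le (h : ROCConcave Q1 Q2) {p q s t : ℝ} (hpq : p ≤ q)
    (hqs : q < s) (hst : s ≤ t) :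
    Q2.real (Icc p q) * Q1.real (Icc s t) ≤ Q1.real (Icc p q) * Q2.real (Icc s t) := by
  have hsq : Ici s ⊆ Ioi q := fun x hx => hqs.trans_le hx
  have hqp : Ioi q ⊆ Ici p := fun x hx => (hpq.trans_lt hx).le
  have hts : Ioi t ⊆ Ici s := fun x hx => hst.trans hx.le
  have hlm := h.measureReal_mul_le (Ici_mem_halflines p) (Ioi_mem_halflines q)
    (Ici_mem_halflines s) hsq hqp
  have hmj := h.measureReal_mul_le (Ioi_mem_halflines q) (Ici_mem_halflines s)
    (Ioi_mem_halflines t) hts hsq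
  have hlmj := h.measureReal_mul_le (Ici_mem_halflines p) (Ioi_mem_halflines q)
    (Ioi_mem_halflines t) (hts.trans hsq) hqp
  rw [Ici_sdiff_Ioi, Ioi_sdiff_Ici] at hlm
  rw [Ioi_sdiff_Ici, Ici_sdiff_Ioi] at hmj
  have hsplit : Ioc q t = Ioo q s ∪ Icc s t := (Ioo_union_Icc_eq_Ioc hqs hst).symm
  have hdisj : Disjoint (Ioo q s) (Icc s t) :=
    Set.disjoint_left.2 fun x hx hx' => hx.2.not_ge hx'.1
  rw [Ici_sdiff_Ioi, Ioi_sdiff_Ioi, hsplit, measureReal_union hdisj measurableSet_Icc,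
    measureReal_union hdisj measurableSet_Icc] at hlmj
  exact mul_le_mul_of_mul_le_mul_of_add measureReal_nonneg measureReal_nonneg measureReal_nonneg
    measureReal_nonneg hlm hmj hlmj

lemma ROCConcave.measure_Icc_div_le (h : ROCConcave Q1 Q2) {p q s t : ℝ} (hpq : p ≤ q)
    (hqs : q < s) (hst : s ≤ t) (hst₀ : (Q1 + Q2) (Icc s t) ≠ 0) :
    Q2 (Icc p q) / (Q1 + Q2) (Icc p q) ≤ Q2 (Icc s t) / (Q1 + Q2) (Icc s t) := by
  have key : Q2 (Icc p q) * (Q1 + Q2) (Icc s t) ≤ Q2 (Icc s t) * (Q1 + Q2) (Icc p q) := by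
    rw [← ENNReal.toReal_le_toReal (by finiteness) (by finiteness)]
    simp only [ENNReal.toReal_mul, Measure.add_apply, ENNReal.toReal_add (measure_ne_top _ _)
      (measure_ne_top _ _), ← measureReal_def]
    nlinarith [h.measureReal_Icc_mul_le hpq hqs hst]
  refine ENNReal.div_le_of_le_mul ?_
  rwa [← ENNReal.mul_div_right_comm, ENNReal.le_div_iff_mul_le (.inl hst₀) (.inl (by finiteness))]

lemma ROCConcave.exists_monotoneOn_rnDeriv (h : ROCConcave Q1 Q2) :
    ∃ A : Set ℝ, (∀ᵐ x ∂(Q1 + Q2), x ∈ A) ∧ MonotoneOn (Q2.rnDeriv (Q1 + Q2)) A := by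
  refine ⟨{x | Tendsto (fun r => Q2 (Metric.closedBall x r) / (Q1 + Q2) (Metric.closedBall x r))
      (𝓝[>] 0) (𝓝 (Q2.rnDeriv (Q1 + Q2) x))} ∩ (Q1 + Q2).support,
    (Besicovitch.ae_tendsto_rnDeriv Q2 (Q1 + Q2)).and Measure.support_mem_ae, ?_⟩
  rintro x ⟨hx, -⟩ y ⟨hy, hys⟩ hxy
  rcases hxy.eq_or_lt with rfl | hlt
  · rfl
  refine le_of_tendsto_of_tendsto hx hy ?_
  filter_upwards [Ioo_mem_nhdsGT (half_pos (sub_pos.2 hlt))] with r ⟨hr, hrxy⟩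
  simp only [Real.closedBall_eq_Icc]
  refine h.measure_Icc_div_le (by linarith) (by linarith) (by linarith) ?_
  exact ((Measure.mem_support_iff_forall y).1 hys _ (Icc_mem_nhds (by linarith) (by linarith))).ne'

theorem ROCConcave.likelihoodRatioLE (h : ROCConcave Q1 Q2) : LikelihoodRatioLE Q1 Q2 := by
  obtain ⟨A, hA, hmono⟩ := h.exists_monotoneOn_rnDeriv
  obtain ⟨g₀, hg₀, hg₀A⟩ :=
    hmono.exists_monotone_extension (OrderBot.bddBelow _) (OrderTop.bddAbove _)
  set g : ℝ → ℝ≥0∞ := fun x => min (g₀ x) 1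
  have hg : Monotone g := fun x y hxy => min_le_min_right 1 (hg₀ hxy)
  have hQ2 : IsDensity Q2 (Q1 + Q2) g := by
    refine isDensity_of_ae_eq_rnDeriv (Measure.absolutelyContinuous_of_le
      (Measure.le_add_left le_rfl)) hg.measurable ?_
    filter_upwards [hA, Measure.rnDeriv_le_one_of_le (Measure.le_add_left le_rfl)]
      with x hxA hx1
    simp only [g, ← hg₀A hxA]
    exact min_eq_left hx1
  refine ⟨Q1 + Q2, 1 - g, g, inferInstance, hQ2.one_sub_of_add fun x => min_le_right _ _, hQ2,
    fun x y hxy _ _ => ENNReal.div_le_div (hg hxy) (tsub_le_tsub_left (hg hxy) 1)⟩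

end ROC

theorem stmt_11 (Q1 Q2 : Measure ℝ) [IsProbabilityMeasure Q1] [IsProbabilityMeasure Q2] :
    LikelihoodRatioLE Q1 Q2 ↔
    ∀ a b c : ℝ × ℝ, a ∈ ROC Q1 Q2 → b ∈ ROC Q1 Q2 → c ∈ ROC Q1 Q2 →
      a ≠ b → b ≠ c → a ≠ c →
      a.1 ≤ b.1 → b.1 ≤ c.1 → a.2 ≤ b.2 → b.2 ≤ c.2 →
      (c.2 - b.2) * (b.1 - a.1) ≤ (b.2 - a.2) * (c.1 - b.1) :=
  ⟨LikelihoodRatioLE.rocConcave, ROCConcave.likelihoodRatioLE⟩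
end
end

section
/- Let Q1 and Q2 be probability measures on the real line with distribution functions G1 and G2, and suppose Q2 is absolutely continuous with respect to Q1. Then Q1 ≤_lr Q2 if and only if the ordinal dominance curve H(α) := G2(G1^{-1}(α)) is convex on the image G1([−∞,∞]) = {G1(y) : y ∈ [−∞,∞]}, i.e. for all r < s < t in G1([−∞,∞]), (H(s) − H(r))/(s − r) ≤ (H(t) − H(s))/(t − s). -/
open MeasureTheory Set Filter

noncomputable section

/-- The distribution function of `Q` extended to the extended real line:
`G(y) = Q({x : x ≤ y})`, so that `G(⊥) = 0` and `G(⊤) = 1` for a probability measure. -/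
def cdfE (Q : Measure ℝ) : EReal → ℝ :=
  fun y => (Q {x : ℝ | (x : EReal) ≤ y}).toReal

/-- The generalized inverse `G⁻¹(α) = min{y ∈ [-∞,∞] : G(y) ≥ α}`. -/
def quantE (Q : Measure ℝ) (α : ℝ) : EReal :=
  sInf {y : EReal | α ≤ cdfE Q y}

/-! Since `Q2 ≪ Q1`, `H ∘ G1 = G2`; hence for intervals `I = (p, q]` to the left of
`J = (u, v]`, the three-slope inequality for `H` at `G1 p ≤ G1 q ≤ G1 u ≤ G1 v` is exactly the
cross inequality `Q2 I * Q1 J ≤ Q2 J * Q1 I`. A monotone likelihood ratio gives the cross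
inequality for any sets `A ≤ B` by integrating `g2 x * g1 y ≤ g1 x * g2 y` over `A × B`; applied
to the slabs between quantiles it yields convexity of `H`. Conversely, the cross inequality for
small balls together with Besicovitch differentiation makes `dQ2/dQ1` nondecreasing on a
`Q1`-conull set, and its monotone envelope is then a nondecreasing density. -/

open Topology

section

variable {Q Q1 Q2 : Measure ℝ}

lemma measurableSet_coe_le (y : EReal) : MeasurableSet {x : ℝ | (x : EReal) ≤ y} :=
  measurableSet_le measurable_coe_real_ereal measurable_const

lemma cdfE_mono [IsFiniteMeasure Q] : Monotone (cdfE Q) := fun _ _ h =>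
  measureReal_mono fun _ hx => le_trans hx h

lemma quantE_mono : Monotone (quantE Q) := fun _ _ h =>
  sInf_le_sInf fun _ hy => le_trans h hy

lemma measureReal_sdiff_coe_le [IsFiniteMeasure Q] {a b : EReal} (h : a ≤ b) :
    Q.real ({x : ℝ | (x : EReal) ≤ b} \ {x : ℝ | (x : EReal) ≤ a}) = cdfE Q b - cdfE Q a :=
  measureReal_sdiff (fun _ hx => le_trans hx h) (measurableSet_coe_le a)

lemma measureReal_Ioc_eq_cdfE_sub [IsFiniteMeasure Q] {p q : ℝ} (h : p ≤ q) :
    Q.real (Ioc p q) = cdfE Q q - cdfE Q p := by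
  rw [← measureReal_sdiff_coe_le (EReal.coe_le_coe_iff.2 h)]
  congr 1
  ext x
  simp [EReal.coe_le_coe_iff, and_comm]

/-- The infimum defining `quantE` is attained, by right-continuity of `cdfE`. -/
lemma cdfE_quantE [IsFiniteMeasure Q] {α : ℝ} (hα : α ∈ range (cdfE Q)) :
    cdfE Q (quantE Q α) = α := by
  obtain ⟨y, rfl⟩ := hα
  refine le_antisymm (cdfE_mono (sInf_le (le_refl (cdfE Q y)))) ?_
  obtain ⟨u, hu_anti, hu_ge, hu_lim, hu_mem⟩ :=
    (isGLB_sInf {z | cdfE Q y ≤ cdfE Q z}).exists_seq_antitone_tendsto ⟨y, le_refl (cdfE Q y)⟩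
  have hinter :
      ⋂ n, {x : ℝ | (x : EReal) ≤ u n} = {x : ℝ | (x : EReal) ≤ quantE Q (cdfE Q y)} := by
    ext x
    simp only [mem_iInter]
    exact ⟨fun h => ge_of_tendsto' hu_lim h, fun h n => h.trans (hu_ge n)⟩
  have hlim := tendsto_measure_iInter_atTop (μ := Q)
    (fun n => (measurableSet_coe_le (u n)).nullMeasurableSet)
    (fun _ _ h _ hx => le_trans hx (hu_anti h)) ⟨0, measure_ne_top _ _⟩
  rw [hinter] at hlim
  exact ge_of_tendsto' ((ENNReal.tendsto_toReal (measure_ne_top _ _)).comp hlim) hu_mem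

lemma cdfE_quantE_cdfE [IsFiniteMeasure Q1] [IsFiniteMeasure Q2] (hac : Q2 ≪ Q1)
    (y : EReal) : cdfE Q2 (quantE Q1 (cdfE Q1 y)) = cdfE Q2 y := by
  have hle : quantE Q1 (cdfE Q1 y) ≤ y := sInf_le (le_refl (cdfE Q1 y))
  have hnull1 :
      Q1 ({x : ℝ | (x : EReal) ≤ y} \ {x | (x : EReal) ≤ quantE Q1 (cdfE Q1 y)}) = 0 := by
    rw [← measureReal_eq_zero_iff, measureReal_sdiff_coe_le hle, cdfE_quantE ⟨y, rfl⟩, sub_self]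
  have hnull2 := measureReal_sdiff_coe_le (Q := Q2) hle
  rw [measureReal_def, hac hnull1, ENNReal.toReal_zero] at hnull2
  linarith

/-- The ordinal dominance curve `H = G2 ∘ G1⁻¹`. -/
def ordinalDominance (Q1 Q2 : Measure ℝ) (α : ℝ) : ℝ :=
  cdfE Q2 (quantE Q1 α)

/-- Convexity by increasing slopes; unlike `ConvexOn`, it is meaningful on a non-convex set `D`
such as the range of a distribution function. -/
def SlopeConvexOn (D : Set ℝ) (H : ℝ → ℝ) : Prop :=
  ∀ r s t : ℝ, r ∈ D → s ∈ D → t ∈ D → r < s → s < t →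
    (H s - H r) / (s - r) ≤ (H t - H s) / (t - s)

lemma SlopeConvexOn.sub_mul_sub_le {D : Set ℝ} {H : ℝ → ℝ} (hH : SlopeConvexOn D H)
    {r s t w : ℝ} (hr : r ∈ D) (hs : s ∈ D) (ht : t ∈ D) (hw : w ∈ D)
    (hrs : r ≤ s) (hst : s ≤ t) (htw : t ≤ w) :
    (H s - H r) * (w - t) ≤ (H w - H t) * (s - r) := by
  rcases hrs.eq_or_lt with rfl | hrs
  · simp
  rcases htw.eq_or_lt with rfl | htw
  · simp
  have hslope : (H s - H r) / (s - r) ≤ (H w - H t) / (w - t) := by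
    rcases hst.eq_or_lt with rfl | hst
    · exact hH r s w hr hs hw hrs htw
    · exact (hH r s t hr hs ht hrs hst).trans (hH s t w hs ht hw hst htw)
  rwa [div_le_div_iff₀ (sub_pos.2 hrs) (sub_pos.2 htw)] at hslope

lemma mul_le_mul_iff_measureReal [IsFiniteMeasure Q1] [IsFiniteMeasure Q2] {A B : Set ℝ} :
    Q2 A * Q1 B ≤ Q2 B * Q1 A ↔ Q2.real A * Q1.real B ≤ Q2.real B * Q1.real A := by
  rw [← ENNReal.toReal_le_toReal (by finiteness) (by finiteness), ENNReal.toReal_mul,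
    ENNReal.toReal_mul]
  rfl

lemma ENNReal.mul_le_mul_of_div_le_div_s12 {a b c d : ENNReal} (ha : a ≠ ⊤) (hc : c ≠ ⊤)
    (hd : d ≠ ⊤) (h : 0 < a + b → 0 < c + d → b / a ≤ d / c) : b * c ≤ a * d := by
  rcases eq_or_ne c 0 with rfl | hc0
  · simp
  rcases eq_or_ne b 0 with rfl | hb0
  · simp
  have hratio := h (pos_iff_ne_zero.2 (by simp [hb0])) (pos_iff_ne_zero.2 (by simp [hc0]))
  rcases eq_or_ne a 0 with rfl | ha0
  · rw [ENNReal.div_zero hb0, top_le_iff, ENNReal.div_eq_top] at hratio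
    tauto
  calc b * c = b / a * a * c := by rw [ENNReal.div_mul_cancel ha0 ha]
    _ ≤ d / c * a * c := by gcongr
    _ = a * d := by rw [mul_right_comm, ENNReal.div_mul_cancel hc0 hc, mul_comm]

lemma LikelihoodRatioLE.mul_le_mul_of_forall_le [IsFiniteMeasure Q1] [IsFiniteMeasure Q2]
    (h : LikelihoodRatioLE Q1 Q2) {A B : Set ℝ} (hA : MeasurableSet A) (hB : MeasurableSet B)
    (hAB : ∀ x ∈ A, ∀ y ∈ B, x ≤ y) :
    Q2 A * Q1 B ≤ Q2 B * Q1 A := by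
  obtain ⟨μ, g1, g2, -, ⟨hg1m, hg1⟩, ⟨hg2m, hg2⟩, hmono⟩ := h
  have hfin : ∀ {Q : Measure ℝ} [IsFiniteMeasure Q] {g : ℝ → ENNReal},
      IsDensity Q μ g → ∀ᵐ x ∂μ, g x < ⊤ := fun {Q} _ {g} hg =>
    ae_lt_top hg.1 (by rw [← setLIntegral_univ, ← hg.2 univ MeasurableSet.univ]; finiteness)
  rw [hg2 A hA, hg1 B hB, hg2 B hB, hg1 A hA]
  calc (∫⁻ x in A, g2 x ∂μ) * ∫⁻ y in B, g1 y ∂μ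
      = ∫⁻ x in A, ∫⁻ y in B, g2 x * g1 y ∂μ ∂μ := by
        simp_rw [lintegral_const_mul _ hg1m]; rw [lintegral_mul_const _ hg2m]
    _ ≤ ∫⁻ x in A, ∫⁻ y in B, g1 x * g2 y ∂μ ∂μ := by
        refine setLIntegral_mono_ae' hA ?_
        filter_upwards [hfin ⟨hg1m, hg1⟩] with x hx1 hxA
        refine setLIntegral_mono_ae' hB ?_
        filter_upwards [hfin ⟨hg1m, hg1⟩, hfin ⟨hg2m, hg2⟩] with y hy1 hy2 hyB
        exact ENNReal.mul_le_mul_of_div_le_div_s12 hx1.ne hy1.ne hy2.ne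
          (hmono x y (hAB x hxA y hyB))
    _ = (∫⁻ y in B, g2 y ∂μ) * ∫⁻ x in A, g1 x ∂μ := by
        simp_rw [lintegral_const_mul _ hg2m]; rw [lintegral_mul_const _ hg1m, mul_comm]

theorem LikelihoodRatioLE.slopeConvexOn_ordinalDominance [IsFiniteMeasure Q1]
    [IsFiniteMeasure Q2] (h : LikelihoodRatioLE Q1 Q2) :
    SlopeConvexOn (range (cdfE Q1)) (ordinalDominance Q1 Q2) := by
  intro r s t hr hs ht hrs hst
  have hab := quantE_mono (Q := Q1) hrs.le
  have hbc := quantE_mono (Q := Q1) hst.le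
  have key := h.mul_le_mul_of_forall_le
    (A := {x : ℝ | (x : EReal) ≤ quantE Q1 s} \ {x | (x : EReal) ≤ quantE Q1 r})
    (B := {x : ℝ | (x : EReal) ≤ quantE Q1 t} \ {x | (x : EReal) ≤ quantE Q1 s})
    ((measurableSet_coe_le _).diff (measurableSet_coe_le _))
    ((measurableSet_coe_le _).diff (measurableSet_coe_le _))
    fun x hx y hy => EReal.coe_le_coe_iff.1 (hx.1.trans (not_le.1 hy.2).le)
  rw [mul_le_mul_iff_measureReal, measureReal_sdiff_coe_le hab, measureReal_sdiff_coe_le hbc,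
    measureReal_sdiff_coe_le hab, measureReal_sdiff_coe_le hbc, cdfE_quantE hr, cdfE_quantE hs,
    cdfE_quantE ht] at key
  rw [div_le_div_iff₀ (sub_pos.2 hrs) (sub_pos.2 hst)]
  exact key

lemma measure_Ioc_mul_le [IsFiniteMeasure Q1] [IsFiniteMeasure Q2] (hac : Q2 ≪ Q1)
    (hH : SlopeConvexOn (range (cdfE Q1)) (ordinalDominance Q1 Q2)) {p q u v : ℝ}
    (hpq : p ≤ q) (hqu : q ≤ u) (huv : u ≤ v) :
    Q2 (Ioc p q) * Q1 (Ioc u v) ≤ Q2 (Ioc u v) * Q1 (Ioc p q) := by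
  have hG2 : ∀ x : ℝ, cdfE Q2 x = ordinalDominance Q1 Q2 (cdfE Q1 x) :=
    fun x => (cdfE_quantE_cdfE hac x).symm
  have hG1 : ∀ {x y : ℝ}, x ≤ y → cdfE Q1 x ≤ cdfE Q1 y :=
    fun h => cdfE_mono (EReal.coe_le_coe_iff.2 h)
  rw [mul_le_mul_iff_measureReal, measureReal_Ioc_eq_cdfE_sub hpq,
    measureReal_Ioc_eq_cdfE_sub huv, measureReal_Ioc_eq_cdfE_sub hpq,
    measureReal_Ioc_eq_cdfE_sub huv, hG2, hG2, hG2, hG2]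
  exact hH.sub_mul_sub_le ⟨_, rfl⟩ ⟨_, rfl⟩ ⟨_, rfl⟩ ⟨_, rfl⟩ (hG1 hpq) (hG1 hqu) (hG1 huv)

lemma tendsto_measure_Ioc_sub_nhdsGT (Q : Measure ℝ) [IsFiniteMeasure Q] (p q : ℝ) :
    Tendsto (fun ε => Q (Ioc (p - ε) q)) (𝓝[>] 0) (𝓝 (Q (Icc p q))) := by
  have h := tendsto_measure_biInter_gt (μ := Q) (s := fun ε => Ioc (p - ε) q) (a := 0)
    (fun _ _ => measurableSet_Ioc.nullMeasurableSet)
    (fun _ _ _ hij => Ioc_subset_Ioc_left (by linarith)) ⟨1, one_pos, measure_ne_top _ _⟩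
  have hinter : ⋂ ε > 0, Ioc (p - ε) q = Icc p q := by
    ext x
    simp only [mem_Icc, mem_iInter, mem_Ioc]
    refine ⟨fun hx => ⟨?_, (hx 1 one_pos).2⟩, fun hx ε hε => ⟨by linarith [hx.1], hx.2⟩⟩
    exact le_of_forall_sub_le fun ε hε => (hx ε hε).1.le
  rwa [hinter] at h

lemma measure_Icc_mul_le [IsFiniteMeasure Q1] [IsFiniteMeasure Q2] (hac : Q2 ≪ Q1)
    (hH : SlopeConvexOn (range (cdfE Q1)) (ordinalDominance Q1 Q2)) {p q u v : ℝ}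
    (hpq : p ≤ q) (hqu : q < u) (huv : u ≤ v) :
    Q2 (Icc p q) * Q1 (Icc u v) ≤ Q2 (Icc u v) * Q1 (Icc p q) := by
  have hlim {Q Q' : Measure ℝ} [IsFiniteMeasure Q] [IsFiniteMeasure Q'] (a b c d : ℝ) :=
    ENNReal.Tendsto.mul (tendsto_measure_Ioc_sub_nhdsGT Q a b) (Or.inr (measure_ne_top _ _))
      (tendsto_measure_Ioc_sub_nhdsGT Q' c d) (Or.inr (measure_ne_top _ _))
  refine le_of_tendsto_of_tendsto (hlim p q u v) (hlim u v p q) ?_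
  filter_upwards [Ioo_mem_nhdsGT (sub_pos.2 hqu)] with ε ⟨hε, hεu⟩
  exact measure_Ioc_mul_le hac hH (by linarith) (by linarith) (by linarith)

lemma ENNReal.div_le_div_of_mul_le {a b c d : ENNReal} (hb : b ≠ 0) (hb' : b ≠ ⊤)
    (hd : d ≠ 0) (hd' : d ≠ ⊤) (h : a * d ≤ c * b) : a / b ≤ c / d := by
  rwa [ENNReal.div_le_iff hb hb', ← ENNReal.mul_div_right_comm,
    ENNReal.le_div_iff_mul_le (Or.inl hd) (Or.inl hd')]

/-- Lebesgue–Besicovitch differentiation: at `Q1`-almost every point of the support of `Q1` the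
ratios `Q2 / Q1` of small balls tend to the density, and these ratios increase from left to
right. -/
lemma exists_mem_ae_monotoneOn_rnDeriv [IsFiniteMeasure Q1] [IsFiniteMeasure Q2]
    (hac : Q2 ≪ Q1) (hH : SlopeConvexOn (range (cdfE Q1)) (ordinalDominance Q1 Q2)) :
    ∃ S ∈ ae Q1, MonotoneOn (Q2.rnDeriv Q1) S := by
  refine ⟨{x | x ∈ Q1.support ∧ Tendsto (fun r => Q2 (Metric.closedBall x r) /
    Q1 (Metric.closedBall x r)) (𝓝[>] 0) (𝓝 (Q2.rnDeriv Q1 x))}, ?_, ?_⟩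
  · filter_upwards [Q1.support_mem_ae, Besicovitch.ae_tendsto_rnDeriv Q2 Q1] with x h1 h2
    exact ⟨h1, h2⟩
  rintro x ⟨hx, hx_lim⟩ y ⟨hy, hy_lim⟩ hxy
  rcases hxy.eq_or_lt with rfl | hxy
  · rfl
  refine le_of_tendsto_of_tendsto hx_lim hy_lim ?_
  filter_upwards [Ioo_mem_nhdsGT (half_pos (sub_pos.2 hxy))] with r ⟨hr, hrxy⟩
  have hball : ∀ z ∈ Q1.support, Q1 (Metric.closedBall z r) ≠ 0 := fun z hz =>
    ((Q1.mem_support_iff_forall z).1 hz _ (Metric.closedBall_mem_nhds z hr)).ne'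
  refine ENNReal.div_le_div_of_mul_le (hball x hx) (measure_ne_top _ _) (hball y hy)
    (measure_ne_top _ _) ?_
  rw [Real.closedBall_eq_Icc, Real.closedBall_eq_Icc]
  exact measure_Icc_mul_le hac hH (by linarith) (by linarith) (by linarith)

lemma MonotoneOn.exists_monotone_ae_eq {α β : Type*} [Preorder α] [MeasurableSpace α]
    [CompleteLattice β] {μ : Measure α} {f : α → β} {S : Set α} (hf : MonotoneOn f S)
    (hS : S ∈ ae μ) : ∃ g : α → β, Monotone g ∧ f =ᵐ[μ] g := by
  refine ⟨fun x => ⨆ y ∈ S ∩ Iic x, f y, fun x x' h => biSup_mono fun y hy =>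
    ⟨hy.1, le_trans hy.2 h⟩, ?_⟩
  filter_upwards [hS] with x hx
  exact le_antisymm (le_biSup f ⟨hx, le_rfl⟩) (iSup₂_le fun y hy => hf hy.1 hx hy.2)

lemma likelihoodRatioLE_of_monotone [SigmaFinite Q1] {g : ℝ → ENNReal} (hg : Monotone g)
    (hQ2 : ∀ B, MeasurableSet B → Q2 B = ∫⁻ x in B, g x ∂Q1) : LikelihoodRatioLE Q1 Q2 := by
  refine ⟨Q1, 1, g, inferInstance, ⟨measurable_const, fun B _ => ?_⟩, ⟨hg.measurable, hQ2⟩, ?_⟩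
  · simp
  · intro x y hxy _ _
    simpa using hg hxy

theorem SlopeConvexOn.likelihoodRatioLE [IsFiniteMeasure Q1] [IsFiniteMeasure Q2]
    (hac : Q2 ≪ Q1) (hH : SlopeConvexOn (range (cdfE Q1)) (ordinalDominance Q1 Q2)) :
    LikelihoodRatioLE Q1 Q2 := by
  obtain ⟨S, hS, hmono⟩ := exists_mem_ae_monotoneOn_rnDeriv hac hH
  obtain ⟨g, hg, hfg⟩ := hmono.exists_monotone_ae_eq hS
  refine likelihoodRatioLE_of_monotone hg fun B _ => ?_
  rw [← Measure.setLIntegral_rnDeriv hac]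
  exact lintegral_congr_ae (ae_restrict_of_ae hfg)

end

theorem stmt_12 (Q1 Q2 : Measure ℝ) [IsProbabilityMeasure Q1] [IsProbabilityMeasure Q2]
    (hac : Q2 ≪ Q1) :
    LikelihoodRatioLE Q1 Q2 ↔
    (∀ r s t : ℝ, r ∈ Set.range (cdfE Q1) → s ∈ Set.range (cdfE Q1) →
      t ∈ Set.range (cdfE Q1) → r < s → s < t →
      (cdfE Q2 (quantE Q1 s) - cdfE Q2 (quantE Q1 r)) / (s - r) ≤
        (cdfE Q2 (quantE Q1 t) - cdfE Q2 (quantE Q1 s)) / (t - s)) :=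
  ⟨LikelihoodRatioLE.slopeConvexOn_ordinalDominance, SlopeConvexOn.likelihoodRatioLE hac⟩
end
end
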